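/- arXiv:2510.00525 — 4 statements merged into one kernel-verified Lean document; each statement's English description precedes it below -/
import Mathlib

section
/- Let P and S be n×n symmetric positive definite real matrices such that 2P − S is also positive definite, and let Q be any m×n real matrix. Then Q (2P − S)⁻¹ Qᵀ − Q P⁻¹ S P⁻¹ Qᵀ is positive semidefinite; in particular, Q P⁻¹ S P⁻¹ Qᵀ ⪯ Q (2P − S)⁻¹ Qᵀ in the Loewner order. -/
open Matrix

/-- If `P`, `S`, and `2P - S` are symmetric positive definite real matrices and `Q` is any
`m × n` real matrix, then `Q (2P − S)⁻¹ Qᵀ − Q P⁻¹ S P⁻¹ Qᵀ` is positive semidefinite,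
i.e. `Q P⁻¹ S P⁻¹ Qᵀ ⪯ Q (2P − S)⁻¹ Qᵀ` in the Loewner order. -/
theorem young_congruence {n m : ℕ} (P S : Matrix (Fin n) (Fin n) ℝ)
    (hP : P.PosDef) (hS : S.PosDef) (h2PS : ((2 : ℝ) • P - S).PosDef)
    (Q : Matrix (Fin m) (Fin n) ℝ) :
    (Q * ((2 : ℝ) • P - S)⁻¹ * Qᵀ - Q * P⁻¹ * S * P⁻¹ * Qᵀ).PosSemidef := by
  set R : Matrix (Fin n) (Fin n) ℝ := (2 : ℝ) • P - S with hRdef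
  have hPinv : P⁻¹ * P = 1 := nonsing_inv_mul P (isUnit_iff_ne_zero.mpr hP.det_pos.ne')
  have hPinv' : P * P⁻¹ = 1 := mul_nonsing_inv P (isUnit_iff_ne_zero.mpr hP.det_pos.ne')
  have hRinv : R * R⁻¹ = 1 := mul_nonsing_inv R (isUnit_iff_ne_zero.mpr h2PS.det_pos.ne')
  have hRinv' : R⁻¹ * R = 1 := nonsing_inv_mul R (isUnit_iff_ne_zero.mpr h2PS.det_pos.ne')
  have hPt : Pᵀ = P := by
    have := hP.isHermitian.eq
    simpa using this
  have hSt : Sᵀ = S := by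
    have := hS.isHermitian.eq
    simpa using this
  have hPS : P - S = R - P := by
    rw [hRdef, two_smul]
    abel
  have mid : (R - P) * R⁻¹ * (R - P) = P * R⁻¹ * P - S := by
    have h1 : (R - P) * R⁻¹ = 1 - P * R⁻¹ := by
      rw [Matrix.sub_mul, hRinv]
    rw [h1, Matrix.sub_mul, Matrix.one_mul, Matrix.mul_sub (P * R⁻¹) R P,
      Matrix.mul_assoc P R⁻¹ R, hRinv', Matrix.mul_one]
    have h2 : R - P - P = -S := by
      rw [hRdef, two_smul]; abel
    rw [sub_sub_sub_comm]
    rw [show R - P - (P - P * R⁻¹ * P) = R - P - P + P * R⁻¹ * P by abel, h2]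
    abel
  have key : Q * R⁻¹ * Qᵀ - Q * P⁻¹ * S * P⁻¹ * Qᵀ
      = (Q * P⁻¹ * (P - S)) * R⁻¹ * (Q * P⁻¹ * (P - S))ᵀ := by
    have ht : (Q * P⁻¹ * (P - S))ᵀ = (P - S) * P⁻¹ * Qᵀ := by
      rw [Matrix.transpose_mul, Matrix.transpose_mul, transpose_nonsing_inv, hPt,
        Matrix.transpose_sub, hPt, hSt, Matrix.mul_assoc]
    rw [ht, hPS]
    have expand : Q * P⁻¹ * (R - P) * R⁻¹ * ((R - P) * P⁻¹ * Qᵀ)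
        = Q * (P⁻¹ * ((R - P) * R⁻¹ * (R - P)) * P⁻¹) * Qᵀ := by
      simp only [Matrix.mul_assoc]
    rw [expand, mid]
    have h3 : P⁻¹ * (P * R⁻¹ * P - S) * P⁻¹ = R⁻¹ - P⁻¹ * S * P⁻¹ := by
      rw [Matrix.mul_sub, Matrix.sub_mul, ← Matrix.mul_assoc, ← Matrix.mul_assoc, hPinv,
        Matrix.one_mul, Matrix.mul_assoc R⁻¹ P P⁻¹, hPinv', Matrix.mul_one]
    rw [h3, Matrix.mul_sub, Matrix.sub_mul]
    simp only [Matrix.mul_assoc]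
  rw [key]
  have hpsd := (h2PS.inv.posSemidef).mul_mul_conjTranspose_same (Q * P⁻¹ * (P - S))
  simpa using hpsd
end

section
/- (Lyapunov α-stability bound.) Let A be an n×n complex matrix, let α > 0 be a real number, and suppose there exists an n×n Hermitian positive definite complex matrix P such that the Hermitian matrix A P + P Aᴴ + 2αP is negative definite. Then every eigenvalue λ of A (i.e., every λ in the spectrum of A over ℂ) satisfies Re(λ) < −α. -/
open Matrix ComplexOrder

/-- Lyapunov α-stability bound: if there is a Hermitian positive definite `P` with
`A P + P Aᴴ + 2αP` negative definite (i.e. its negation positive definite), then every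
eigenvalue `λ` of the complex matrix `A` satisfies `Re(λ) < −α`. -/
theorem lyapunov_alpha_stability {n : ℕ} (A : Matrix (Fin n) (Fin n) ℂ)
    (α : ℝ) (hα : 0 < α) (P : Matrix (Fin n) (Fin n) ℂ) (hP : P.PosDef)
    (hLyap : (-(A * P + P * Aᴴ + (2 * α) • P)).PosDef) :
    ∀ lam ∈ spectrum ℂ A, lam.re < -α := by
  intro lam hlam
  -- det (λ•1 - A) = 0
  rw [spectrum.mem_iff] at hlam
  have hdet : (algebraMap ℂ (Matrix (Fin n) (Fin n) ℂ) lam - A).det = 0 := by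
    by_contra h
    exact hlam ((Matrix.isUnit_iff_isUnit_det _).mpr (isUnit_iff_ne_zero.mpr h))
  -- det of conjugate transpose is zero
  have hdetH : ((algebraMap ℂ (Matrix (Fin n) (Fin n) ℂ) lam - A)ᴴ).det = 0 := by
    rw [Matrix.det_conjTranspose, hdet, star_zero]
  obtain ⟨v, hv, hv0⟩ := (Matrix.exists_mulVec_eq_zero_iff).mpr hdetH
  -- Aᴴ *ᵥ v = conj lam • v
  have heig : Aᴴ *ᵥ v = (starRingEnd ℂ lam) • v := by
    have : (algebraMap ℂ (Matrix (Fin n) (Fin n) ℂ) lam - A)ᴴ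
        = (starRingEnd ℂ lam) • (1 : Matrix (Fin n) (Fin n) ℂ) - Aᴴ := by
      rw [conjTranspose_sub]
      congr 1
      rw [Algebra.algebraMap_eq_smul_one, Matrix.conjTranspose_smul,
        Matrix.conjTranspose_one]
      rfl
    rw [this, Matrix.sub_mulVec, Matrix.smul_mulVec, Matrix.one_mulVec,
      sub_eq_zero] at hv0
    exact hv0.symm
  -- left eigenvector relation: star v ᵥ* A = lam • star v
  have hleft : star v ᵥ* A = lam • star v := by
    have := congrArg star heig
    rw [Matrix.star_mulVec, conjTranspose_conjTranspose, star_smul] at this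
    simpa using this
  set c : ℂ := star v ⬝ᵥ (P *ᵥ v) with hc
  have hcpos : 0 < c := hP.dotProduct_mulVec_pos hv
  have h1 : star v ⬝ᵥ ((A * P) *ᵥ v) = lam * c := by
    rw [← Matrix.mulVec_mulVec, Matrix.dotProduct_mulVec, hleft, smul_dotProduct,
      smul_eq_mul]
  have h2 : star v ⬝ᵥ ((P * Aᴴ) *ᵥ v) = (starRingEnd ℂ lam) * c := by
    rw [← Matrix.mulVec_mulVec, heig, Matrix.mulVec_smul, dotProduct_smul,
      smul_eq_mul, hc]
  have hquad : 0 < star v ⬝ᵥ ((-(A * P + P * Aᴴ + (2 * α) • P)) *ᵥ v) := hLyap.dotProduct_mulVec_pos hv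
  have hval : star v ⬝ᵥ ((-(A * P + P * Aᴴ + (2 * α) • P)) *ᵥ v)
      = -(lam + starRingEnd ℂ lam + (2 * α : ℝ)) * c := by
    rw [Matrix.neg_mulVec, dotProduct_neg, Matrix.add_mulVec, Matrix.add_mulVec,
      dotProduct_add, dotProduct_add, h1, h2, Matrix.smul_mulVec,
      dotProduct_smul]
    simp only [Complex.real_smul, smul_eq_mul]
    push_cast
    ring
  rw [hval] at hquad
  -- extract real inequality
  have hcim : c.im = 0 := by
    have := (Complex.lt_def.mp hcpos).2; simpa using this.symm
  have hcre : 0 < c.re := by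
    have := (Complex.lt_def.mp hcpos).1; simpa using this
  have hre : lam + starRingEnd ℂ lam = ((2 * lam.re : ℝ) : ℂ) := by
    rw [Complex.add_conj]
  rw [hre] at hquad
  have hcast : (-(((2 * lam.re : ℝ) : ℂ) + ((2 * α : ℝ) : ℂ)))
      = ((-(2 * lam.re + 2 * α) : ℝ) : ℂ) := by push_cast; ring
  rw [hcast] at hquad
  have ht : 0 < (-(2 * lam.re + 2 * α)) * c.re := by
    have := (Complex.lt_def.mp hquad).1
    simpa [Complex.mul_re, hcim] using this
  nlinarith
end

section
/- (Cost-bound part of Theorem 2.) Let n ≥ 1 and let X be a symmetric real (n+1)×(n+1) matrix partitioned as X = [[X₁, X₀],[X₀ᵀ, X₂]] where X₁ ∈ ℝ, X₀ is a 1×n row vector, and X₂ is an n×n symmetric positive definite matrix. Let P be an n×n symmetric positive definite real matrix with 2P − X₂ positive definite, let Q be a 1×n real row vector, and let γ ∈ ℝ satisfy γ > Q (2P − X₂)⁻¹ Qᵀ (identifying the 1×1 matrix on the right with a scalar). Define Ŵ = Q P⁻¹ − X₀ X₂⁻¹. Then [1 Ŵ] X [1; Ŵᵀ] < γ − X₀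 X₂⁻¹ X₀ᵀ + X₁ (an inequality of real scalars). -/
open Matrix

/-- The scalar quadratic cost `[1 W] X [1; Wᵀ]`, where `[1 W]` is the `1 × (1+n)` row vector
obtained by prepending the entry `1` to the row vector `W`. -/
noncomputable def quadCost {n : ℕ} (X : Matrix (Fin 1 ⊕ Fin n) (Fin 1 ⊕ Fin n) ℝ)
    (W : Matrix (Fin 1) (Fin n) ℝ) : ℝ :=
  (fromCols !![(1 : ℝ)] W * X * (fromCols !![(1 : ℝ)] W)ᵀ) 0 0

/-- Cost-bound part of Theorem 2: with `X = [[X₁, X₀],[X₀ᵀ, X₂]]`, `X₂ ≻ 0`, `P ≻ 0`,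
`2P − X₂ ≻ 0`, and `γ > Q (2P − X₂)⁻¹ Qᵀ`, the weight `Ŵ = Q P⁻¹ − X₀ X₂⁻¹` satisfies
`[1 Ŵ] X [1; Ŵᵀ] < γ − X₀ X₂⁻¹ X₀ᵀ + X₁`. -/
theorem cost_bound {n : ℕ} (hn : 1 ≤ n) (X₁ : ℝ)
    (X₀ : Matrix (Fin 1) (Fin n) ℝ) (X₂ : Matrix (Fin n) (Fin n) ℝ)
    (hX₂ : X₂.PosDef)
    (P : Matrix (Fin n) (Fin n) ℝ) (hP : P.PosDef)
    (h2P : ((2 : ℝ) • P - X₂).PosDef)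
    (Q : Matrix (Fin 1) (Fin n) ℝ) (γ : ℝ)
    (hγ : (Q * ((2 : ℝ) • P - X₂)⁻¹ * Qᵀ) 0 0 < γ) :
    quadCost (fromBlocks !![X₁] X₀ X₀ᵀ X₂) (Q * P⁻¹ - X₀ * X₂⁻¹) <
      γ - (X₀ * X₂⁻¹ * X₀ᵀ) 0 0 + X₁ := by
  unfold quadCost
  set S : Matrix (Fin n) (Fin n) ℝ := (2 : ℝ) • P - X₂ with hSdef
  -- basic symmetry and invertibility facts
  have hX₂t : X₂ᵀ = X₂ := by
    simpa [conjTranspose_eq_transpose_of_trivial] using hX₂.isHermitian.eq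
  have hPt : Pᵀ = P := by
    simpa [conjTranspose_eq_transpose_of_trivial] using hP.isHermitian.eq
  have hSt : Sᵀ = S := by
    simpa [conjTranspose_eq_transpose_of_trivial] using h2P.isHermitian.eq
  have hX₂d : IsUnit X₂.det := (isUnit_iff_isUnit_det _).mp hX₂.isUnit
  have hPd : IsUnit P.det := (isUnit_iff_isUnit_det _).mp hP.isUnit
  have hSd : IsUnit S.det := (isUnit_iff_isUnit_det _).mp h2P.isUnit
  have hX₂1 : X₂⁻¹ * X₂ = 1 := nonsing_inv_mul _ hX₂d
  have hX₂2 : X₂ * X₂⁻¹ = 1 := mul_nonsing_inv _ hX₂d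
  have hP1 : P⁻¹ * P = 1 := nonsing_inv_mul _ hPd
  have hP2 : P * P⁻¹ = 1 := mul_nonsing_inv _ hPd
  have hS1 : S⁻¹ * S = 1 := nonsing_inv_mul _ hSd
  have hS2 : S * S⁻¹ = 1 := mul_nonsing_inv _ hSd
  have hPit : P⁻¹ᵀ = P⁻¹ := by rw [transpose_nonsing_inv, hPt]
  have hSit : S⁻¹ᵀ = S⁻¹ := by rw [transpose_nonsing_inv, hSt]
  have hX₂it : X₂⁻¹ᵀ = X₂⁻¹ := by rw [transpose_nonsing_inv, hX₂t]
  set A : Matrix (Fin 1) (Fin n) ℝ := Q * P⁻¹ with hA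
  set B : Matrix (Fin 1) (Fin n) ℝ := X₀ * X₂⁻¹ with hB
  -- step 1 : quadCost formula
  have hq : (fromCols !![(1 : ℝ)] (A - B) * (fromBlocks !![X₁] X₀ X₀ᵀ X₂) *
      (fromCols !![(1 : ℝ)] (A - B))ᵀ) 0 0
      = X₁ + ((A - B) * X₀ᵀ + X₀ * (A - B)ᵀ + (A - B) * X₂ * (A - B)ᵀ) 0 0 := by
    have h1 : (!![(1:ℝ)]) = (1 : Matrix (Fin 1) (Fin 1) ℝ) := by
      ext i j; fin_cases i; fin_cases j; simp
    rw [fromCols_mul_fromBlocks, transpose_fromCols, fromCols_mul_fromRows, h1]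
    simp [Matrix.add_mul, Matrix.add_apply]
    ring
  -- step 2 : key algebraic identity
  have hX0 : X₀ = B * X₂ := by rw [hB, Matrix.mul_assoc, hX₂1, Matrix.mul_one]
  have hX0t : X₀ᵀ = X₂ * Bᵀ := by
    rw [hB, transpose_mul, hX₂it, ← Matrix.mul_assoc, hX₂2, Matrix.one_mul]
  have key : (A - B) * X₀ᵀ + X₀ * (A - B)ᵀ + (A - B) * X₂ * (A - B)ᵀ + B * X₀ᵀ
      = A * X₂ * Aᵀ := by
    rw [transpose_sub, hX0t, hX0]
    simp only [Matrix.sub_mul, Matrix.mul_sub, Matrix.mul_assoc]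
    abel
  -- step 3 : P⁻¹ X₂ P⁻¹ vs S⁻¹
  have hPSP : P⁻¹ * S * P⁻¹ = (2 : ℝ) • P⁻¹ - P⁻¹ * X₂ * P⁻¹ := by
    rw [hSdef, Matrix.mul_sub, mul_smul_comm, hP1, Matrix.sub_mul, smul_mul_assoc,
      Matrix.one_mul]
  have expand : (S⁻¹ - P⁻¹) * S * (S⁻¹ - P⁻¹) = S⁻¹ - P⁻¹ * X₂ * P⁻¹ := by
    rw [Matrix.sub_mul, hS1, Matrix.sub_mul, Matrix.one_mul, Matrix.mul_sub,
      Matrix.mul_assoc P⁻¹ S S⁻¹, hS2, Matrix.mul_one, hPSP, two_smul]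
    abel
  have hMt : (Q * (S⁻¹ - P⁻¹))ᵀ = (S⁻¹ - P⁻¹) * Qᵀ := by
    rw [transpose_mul, transpose_sub, hSit, hPit]
  have hdiff : Q * S⁻¹ * Qᵀ - Q * (P⁻¹ * X₂ * P⁻¹) * Qᵀ
      = (Q * (S⁻¹ - P⁻¹)) * S * (Q * (S⁻¹ - P⁻¹))ᵀ := by
    rw [hMt, ← Matrix.sub_mul, ← Matrix.mul_sub, ← expand]
    simp [Matrix.mul_assoc]
  have hpos : 0 ≤ ((Q * (S⁻¹ - P⁻¹)) * S * (Q * (S⁻¹ - P⁻¹))ᵀ) 0 0 := by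
    have hps := h2P.posSemidef.mul_mul_conjTranspose_same (Q * (S⁻¹ - P⁻¹))
    rw [conjTranspose_eq_transpose_of_trivial] at hps
    have := hps.dotProduct_mulVec_nonneg (fun _ => (1 : ℝ))
    simpa [dotProduct, mulVec, Fin.sum_univ_one] using this
  -- step 4 : assemble
  have hAXA : A * X₂ * Aᵀ = Q * (P⁻¹ * X₂ * P⁻¹) * Qᵀ := by
    rw [hA, transpose_mul, hPit]; simp [Matrix.mul_assoc]
  have hle : (A * X₂ * Aᵀ) 0 0 ≤ (Q * S⁻¹ * Qᵀ) 0 0 := by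
    have := congrArg (fun M : Matrix (Fin 1) (Fin 1) ℝ => M 0 0) hdiff
    simp only [Matrix.sub_apply] at this
    rw [hAXA]
    linarith [hpos, this.ge, this.le]
  have hBX : (X₀ * X₂⁻¹ * X₀ᵀ) 0 0 = (B * X₀ᵀ) 0 0 := by rw [hB]
  have keyE := congrArg (fun M : Matrix (Fin 1) (Fin 1) ℝ => M 0 0) key
  simp only [Matrix.add_apply] at keyE
  rw [hq, hBX]
  simp only [Matrix.add_apply] at keyE ⊢
  linarith
end

section
/- (State-space realization of the barycentric interpolant.) Let n ≥ 1, let A be an n×n real matrix, let B_M and B_N be n×1 real matrices, let W be a 1×n real row vector, and let D ∈ ℝ. Let s ∈ ℝ (or ℂ, with all matrices viewed over ℂ) be such that s·I − A is invertible and the scalar m(s) := 1 + W (s·I − A)⁻¹ B_M is nonzero. Then the matrix s·I − (A − B_M W) is invertible, and (D + W (s·I − A)⁻¹ B_N) / m(s) = D − W (s·I − (A − B_M W))⁻¹ (B_M D − B_N), where 1×1 matrices are identified with scalars. -/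
open Matrix

lemma one_by_one_eq_smul_one (K : Matrix (Fin 1) (Fin 1) ℝ) :
    K = K 0 0 • (1 : Matrix (Fin 1) (Fin 1) ℝ) := by
  ext i j
  fin_cases i; fin_cases j
  simp

/-- State-space realization of the barycentric interpolant: if `sI − A` is invertible and the
scalar `m(s) = 1 + W (sI − A)⁻¹ B_M` is nonzero, then `sI − (A − B_M W)` is invertible and
`(D + W (sI − A)⁻¹ B_N) / m(s) = D − W (sI − (A − B_M W))⁻¹ (B_M D − B_N)`,
identifying `1 × 1` matrices with scalars. -/
theorem barycentric_state_space {n : ℕ} (hn : 1 ≤ n)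
    (A : Matrix (Fin n) (Fin n) ℝ) (BM BN : Matrix (Fin n) (Fin 1) ℝ)
    (W : Matrix (Fin 1) (Fin n) ℝ) (D : ℝ) (s : ℝ)
    (hA : IsUnit (s • (1 : Matrix (Fin n) (Fin n) ℝ) - A).det)
    (hm : 1 + (W * (s • (1 : Matrix (Fin n) (Fin n) ℝ) - A)⁻¹ * BM) 0 0 ≠ 0) :
    IsUnit (s • (1 : Matrix (Fin n) (Fin n) ℝ) - (A - BM * W)).det ∧
    (D + (W * (s • (1 : Matrix (Fin n) (Fin n) ℝ) - A)⁻¹ * BN) 0 0) /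
        (1 + (W * (s • (1 : Matrix (Fin n) (Fin n) ℝ) - A)⁻¹ * BM) 0 0) =
      D - (W * (s • (1 : Matrix (Fin n) (Fin n) ℝ) - (A - BM * W))⁻¹ *
        (D • BM - BN)) 0 0 := by
  set E : Matrix (Fin n) (Fin n) ℝ := s • (1 : Matrix (Fin n) (Fin n) ℝ) - A with hEdef
  set a : ℝ := (W * E⁻¹ * BM) 0 0 with ha
  set b : ℝ := (W * E⁻¹ * BN) 0 0 with hb
  have hEE : E * E⁻¹ = 1 := Matrix.mul_nonsing_inv E hA
  have hF : s • (1 : Matrix (Fin n) (Fin n) ℝ) - (A - BM * W) = E + BM * W := by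
    rw [hEdef]; abel
  have hK : W * E⁻¹ * BM = a • (1 : Matrix (Fin 1) (Fin 1) ℝ) := by
    rw [ha]; exact one_by_one_eq_smul_one _
  clear_value E a b
  clear hEdef
  -- determinant
  have hdet : (E + BM * W).det = E.det * (1 + a) := by
    have h : E + BM * W = E * (1 + E⁻¹ * (BM * W)) := by
      rw [Matrix.mul_add, Matrix.mul_one, ← Matrix.mul_assoc, hEE, Matrix.one_mul]
    rw [h, Matrix.det_mul]
    congr 1
    rw [← Matrix.mul_assoc, Matrix.det_one_add_mul_comm, ← Matrix.mul_assoc, hK,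
      Matrix.det_fin_one]
    simp
  have hunit : IsUnit (E + BM * W).det := by
    rw [hdet, isUnit_iff_ne_zero]
    exact mul_ne_zero (isUnit_iff_ne_zero.mp hA) hm
  refine ⟨by rwa [hF], ?_⟩
  set c : ℝ := (1 + a)⁻¹ with hc
  clear_value c
  -- Sherman–Morrison inverse
  have hinv : (E + BM * W)⁻¹ = E⁻¹ - c • (E⁻¹ * BM * W * E⁻¹) := by
    apply Matrix.inv_eq_right_inv
    have hQ : E * (E⁻¹ * BM * W * E⁻¹) = BM * W * E⁻¹ := by
      rw [show E⁻¹ * BM * W * E⁻¹ = E⁻¹ * (BM * W * E⁻¹) by simp only [Matrix.mul_assoc],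
        ← Matrix.mul_assoc, hEE, Matrix.one_mul]
    have hQ2 : BM * W * (E⁻¹ * BM * W * E⁻¹) = a • (BM * W * E⁻¹) := by
      have e1 : BM * W * (E⁻¹ * BM * W * E⁻¹) = BM * (W * E⁻¹ * BM) * (W * E⁻¹) := by
        simp only [Matrix.mul_assoc]
      rw [e1, hK, Matrix.mul_smul, Matrix.mul_one, Matrix.smul_mul]
      simp only [Matrix.mul_assoc]
    rw [Matrix.add_mul, Matrix.mul_sub, Matrix.mul_sub, Matrix.mul_smul, Matrix.mul_smul,
      hEE, hQ, hQ2, smul_smul]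
    set X : Matrix (Fin n) (Fin n) ℝ := BM * W * E⁻¹
    have hca : c + c * a = 1 := by
      have h := inv_mul_cancel₀ hm
      rw [hc]
      linear_combination h
    match_scalars <;> linarith [hca]
  rw [hF, hinv]
  have hM : W * (E⁻¹ - c • (E⁻¹ * BM * W * E⁻¹)) = (1 - c * a) • (W * E⁻¹) := by
    rw [Matrix.mul_sub, Matrix.mul_smul]
    have e : W * (E⁻¹ * BM * W * E⁻¹) = (W * E⁻¹ * BM) * (W * E⁻¹) := by
      simp only [Matrix.mul_assoc]
    rw [e, hK, Matrix.smul_mul, Matrix.one_mul, smul_smul, sub_smul, one_smul]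
  rw [hM, Matrix.smul_mul, Matrix.mul_sub, Matrix.mul_smul]
  have hentry : ((1 - c * a) • (D • (W * E⁻¹ * BM) - W * E⁻¹ * BN)) 0 0 =
      (1 - c * a) * (D * a - b) := by
    simp only [Matrix.smul_apply, Matrix.sub_apply, smul_eq_mul]
    rw [← ha, ← hb]
  rw [hentry, hc]
  have h := inv_mul_cancel₀ hm
  field_simp
  ring
end
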